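/- arXiv:1710.09673 — 3 statements merged into one kernel-verified Lean document; each statement's English description precedes it below -/
import Mathlib

section
/- For every p ∈ [1, ∞], the transfer operator L_{F,G}, defined on bounded continuous functions, extends to a bounded operator from L^p(ℝ^d) to L^p(ℝ^d); moreover ‖L_{F,G}u‖_{L^p} ≤ α·‖u‖_{L^p} for all u ∈ L^p(ℝ^d), and the support of L_{F,G}u is contained in U. -/
/-!
Write `L_{F,G} u (x) = ∑_{F y = x} G(y) u(y)` as a fiber sum. Cutting `tsupport G` into finitely
many measurable pieces on which `F` is injective turns the fiber sum of any function carried by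
`tsupport G` into a finite sum of push-forwards along local inverses of `F`; hence it is
measurable, and the change of variables formula gives the area formula
`∫ ∑_{F y = x} h(y) dx = ∫ |det DF| h`.

With `M = ‖G · det DF‖_∞` and the weight `w = 1 / |det DF|` on `tsupport G` we have `|G| ≤ M w`,
so Hölder's inequality on each fiber gives
`|L u (x)|^p ≤ M^p (∑_{F y = x} w(y))^(p-1) ∑_{F y = x} w(y) |u(y)|^p`.
The first fiber sum is bounded by the supremum in `α` (it vanishes off `F(U') ∩ U`), and by the
area formula the second one integrates to `∫_{tsupport G} |u|^p ≤ ‖u‖_p^p`. Since `α` may be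
infinite, membership in `L^p` comes from the same estimate with the weight `1` on `tsupport G`,
whose fiber sums are bounded by the number of pieces.
-/

open MeasureTheory Filter Set
open scoped FourierTransform ENNReal NNReal Topology

noncomputable section

abbrev Euc (d : ℕ) := EuclideanSpace ℝ (Fin d)

/-- C^r smoothness for a real exponent r > 0: the map is C^⌊r⌋ and its ⌊r⌋-th
derivative is (r−⌊r⌋)-Hölder on compact sets. -/
def ContDiffHolder {E F : Type*} [NormedAddCommGroup E] [NormedSpace ℝ E]
    [NormedAddCommGroup F] [NormedSpace ℝ F] (r : ℝ) (f : E → F) : Prop :=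
  ContDiff ℝ (⌊r⌋₊ : ℕ) f ∧
    ∀ K : Set E, IsCompact K → ∃ C : ℝ, ∀ x ∈ K, ∀ y ∈ K,
      ‖iteratedFDeriv ℝ ⌊r⌋₊ f x - iteratedFDeriv ℝ ⌊r⌋₊ f y‖ ≤ C * ‖x - y‖ ^ (r - ⌊r⌋₊)

/-- Transfer operator (L_{F,G} u)(x) = ∑_{y : F y = x} G(y)·u(y). -/
def transferOp (d : ℕ) (F : Euc d → Euc d) (G : Euc d → ℂ) (u : Euc d → ℂ) :
    Euc d → ℂ :=
  fun x => ∑' y : {y : Euc d // F y = x}, G y * u y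

/-- The constant α = α(F,G,p). -/
def alphaConst (d : ℕ) (F : Euc d → Euc d) (G : Euc d → ℂ) (p : ℝ≥0∞)
    (U U' : Set (Euc d)) : ℝ≥0∞ :=
  if p = 1 then eLpNorm (fun y => G y * (fderiv ℝ F y).det) ∞ volume
  else
    (⨆ x ∈ (F '' U') ∩ U, ∑' y : {y : Euc d // F y = x},
        ENNReal.ofReal (1 / |(fderiv ℝ F y).det|)) ^ (1 - (1/p).toReal) *
      eLpNorm (fun y => G y * (fderiv ℝ F y).det) ∞ volume

open Function

section FiberSum

variable {X Y β : Type*} [AddCommMonoid β] [TopologicalSpace β]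

def fiberSum (F : X → Y) (f : X → β) (x : Y) : β := ∑' y : {y // F y = x}, f y

lemma fiberSum_eq_zero_of_notMem_image {F : X → Y} {f : X → β} {x : Y}
    (hx : x ∉ F '' support f) : fiberSum F f x = 0 :=
  (tsum_congr fun (y : {y // F y = x}) => by_contra fun hy => hx ⟨y, hy, y.2⟩).trans tsum_zero

lemma support_fiberSum_subset (F : X → Y) (f : X → β) :
    support (fiberSum F f) ⊆ F '' support f :=
  fun _ hx => by_contra fun hxf => hx (fiberSum_eq_zero_of_notMem_image hxf)

lemma tsupport_fiberSum_subset [TopologicalSpace X] [TopologicalSpace Y] [T2Space Y]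
    {F : X → Y} (hF : Continuous F) {f : X → β} (hf : HasCompactSupport f) :
    tsupport (fiberSum F f) ⊆ F '' tsupport f :=
  closure_minimal ((support_fiberSum_subset F f).trans (image_mono (subset_tsupport f)))
    (hf.image hF).isClosed

lemma summable_fiber_indicator_of_injOn {F : X → Y} {S : Set X} (hS : InjOn F S) (f : X → β)
    (x : Y) : Summable fun y : {y // F y = x} => S.indicator f y := by
  refine summable_of_hasFiniteSupport (Set.Subsingleton.finite fun y₁ hy₁ y₂ hy₂ => ?_)
  exact Subtype.ext (hS (mem_of_indicator_ne_zero hy₁) (mem_of_indicator_ne_zero hy₂)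
    (y₁.2.trans y₂.2.symm))

lemma fiberSum_indicator_of_injOn [Nonempty X] {F : X → Y} {S : Set X} (hS : InjOn F S)
    (f : X → β) : fiberSum F (S.indicator f) = (F '' S).indicator (f ∘ invFunOn F S) := by
  ext x
  by_cases hx : x ∈ F '' S
  · obtain ⟨y, hy, rfl⟩ := hx
    rw [indicator_of_mem (mem_image_of_mem F hy), comp_apply, hS.leftInvOn_invFunOn hy,
      fiberSum, tsum_eq_single ⟨y, rfl⟩ fun y' hy' => ?_, indicator_of_mem hy]
    exact indicator_of_notMem (fun h => hy' (Subtype.ext (hS h hy y'.2))) f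
  · rw [indicator_of_notMem hx]
    exact fiberSum_eq_zero_of_notMem_image fun ⟨y, hy, hyx⟩ =>
      hx ⟨y, mem_of_indicator_ne_zero hy, hyx⟩

lemma fiberSum_eq_sum_indicator [ContinuousAdd β] [T2Space β] [Nonempty X] {ι : Type*} [Fintype ι]
    {F : X → Y} {S : ι → Set X} (hdisj : Pairwise (Disjoint on S)) (hinj : ∀ j, InjOn F (S j))
    {f : X → β} (hf : support f ⊆ ⋃ j, S j) :
    fiberSum F f = ∑ j, (F '' S j).indicator (f ∘ invFunOn F (S j)) := by
  have hf_sum : f = fun y => ∑ j, (S j).indicator f y := by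
    rw [← Finset.indicator_biUnion _ _ fun i _ j _ hij => hdisj hij]
    simpa using (indicator_eq_self.2 hf).symm
  ext x
  simp_rw [Finset.sum_apply, ← fiberSum_indicator_of_injOn (hinj _)]
  conv_lhs => rw [fiberSum, hf_sum]
  exact Summable.tsum_finsetSum fun j _ => summable_fiber_indicator_of_injOn (hinj j) f x

lemma fiberSum_le_card_mul [Nonempty X] {ι : Type*} [Fintype ι] {F : X → Y} {S : ι → Set X}
    (hdisj : Pairwise (Disjoint on S)) (hinj : ∀ j, InjOn F (S j)) {f : X → ℝ≥0∞} {c : ℝ≥0∞}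
    (hfc : ∀ y, f y ≤ c) (hf : support f ⊆ ⋃ j, S j) (x : Y) :
    fiberSum F f x ≤ Fintype.card ι * c := by
  rw [fiberSum_eq_sum_indicator hdisj hinj hf, Finset.sum_apply, ← nsmul_eq_mul]
  refine Finset.sum_le_card_nsmul _ _ _ fun j _ => ?_
  exact indicator_apply_le' (fun _ => hfc _) fun _ => zero_le

lemma enorm_fiberSum_le {β : Type*} [NormedAddCommGroup β] {F : X → Y} {f : X → β}
    {g : X → ℝ≥0∞} {M : ℝ≥0∞} (hf : ∀ y, ‖f y‖ₑ ≤ M * g y) (x : Y) :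
    ‖fiberSum F f x‖ₑ ≤ M * fiberSum F g x :=
  enorm_tsum_le_tsum_enorm.trans <|
    (ENNReal.tsum_le_tsum fun y : {y // F y = x} => hf y).trans_eq ENNReal.tsum_mul_left

end FiberSum

structure InjOnMeasurablePieces {X Y ι : Type*} [MeasurableSpace X] (F : X → Y)
    (S : ι → Set X) : Prop where
  measurableSet : ∀ j, MeasurableSet (S j)
  pairwise_disjoint : Pairwise (Disjoint on S)
  injOn : ∀ j, InjOn F (S j)

lemma InjOnMeasurablePieces.disjointed {X Y ι : Type*} [MeasurableSpace X] [LinearOrder ι]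
    [LocallyFiniteOrderBot ι] {F : X → Y} {K : ι → Set X} (hK : ∀ j, MeasurableSet (K j))
    (hinj : ∀ j, InjOn F (K j)) : InjOnMeasurablePieces F (disjointed K) where
  measurableSet j := disjointedRec (fun _ i ht => ht.diff (hK i)) (hK j)
  pairwise_disjoint := disjoint_disjointed K
  injOn j := (hinj j).mono (disjointed_subset K j)

lemma ENNReal.inner_le_weight_mul_Lp_tsum {ι : Type*} {p : ℝ} (hp : 1 ≤ p) (w f : ι → ℝ≥0∞) :
    ∑' i, w i * f i ≤ (∑' i, w i) ^ (1 - p⁻¹) * (∑' i, w i * f i ^ p) ^ p⁻¹ := by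
  have hp₀ : 0 ≤ p⁻¹ := by positivity
  have hp₁ : 0 ≤ 1 - p⁻¹ := sub_nonneg.2 (inv_le_one_of_one_le₀ hp)
  rw [ENNReal.tsum_eq_iSup_sum]
  refine iSup_le fun s => (ENNReal.inner_le_weight_mul_Lp_of_nonneg s hp w f).trans ?_
  gcongr <;> exact ENNReal.sum_le_tsum s

section Measure

variable {E : Type*} [NormedAddCommGroup E] [NormedSpace ℝ E] [FiniteDimensional ℝ E]
  [MeasurableSpace E] [BorelSpace E] {F : E → E}

lemma Differentiable.ae_forall_fiber (hF : Differentiable ℝ F) (μ : Measure E)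
    [μ.IsAddHaarMeasure] {P : E → Prop} (h : ∀ᵐ y ∂μ, P y) :
    ∀ᵐ x ∂μ, ∀ y, F y = x → P y := by
  refine measure_mono_null (fun x hx => ?_)
    (addHaar_image_eq_zero_of_differentiableOn_of_addHaar_eq_zero μ hF.differentiableOn
      (ae_iff.1 h))
  obtain ⟨y, rfl, hy⟩ : ∃ y, F y = x ∧ ¬P y := by simpa using hx
  exact ⟨y, hy, rfl⟩

lemma fiberSum_ae_congr {β : Type*} [AddCommMonoid β] [TopologicalSpace β]
    (hF : Differentiable ℝ F) {μ : Measure E} [μ.IsAddHaarMeasure] {f g : E → β}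
    (h : f =ᵐ[μ] g) : fiberSum F f =ᵐ[μ] fiberSum F g := by
  filter_upwards [hF.ae_forall_fiber μ h] with x hx using tsum_congr fun y => hx y y.2

lemma measurable_indicator_image_comp_invFunOn {β : Type*} [MeasurableSpace β] [Zero β]
    (hF : Differentiable ℝ F) {S : Set E} (hS : MeasurableSet S) (hinj : InjOn F S)
    {f : E → β} (hf : Measurable f) :
    Measurable ((F '' S).indicator (f ∘ invFunOn F S)) := by
  have hF' : ∀ y ∈ S, HasFDerivWithinAt F (fderiv ℝ F y) S y :=
    fun y _ => (hF y).hasFDerivAt.hasFDerivWithinAt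
  obtain ⟨g, hg, hgF⟩ := (measurableEmbedding_of_fderivWithin hS hF' hinj).exists_measurable_extend
    (hf.comp measurable_subtype_coe) fun _ => ⟨0⟩
  have hfg : EqOn (f ∘ invFunOn F S) g (F '' S) := by
    rintro _ ⟨y, hy, rfl⟩
    rw [comp_apply, hinj.leftInvOn_invFunOn hy]
    exact (congrFun hgF ⟨y, hy⟩).symm
  rw [indicator_congr hfg]
  exact hg.indicator (measurable_image_of_fderivWithin hS hF' hinj)

namespace InjOnMeasurablePieces

variable {ι : Type*} [Fintype ι] {S : ι → Set E}

lemma measurable_fiberSum (hS : InjOnMeasurablePieces F S) (hF : Differentiable ℝ F)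
    {β : Type*} [AddCommMonoid β] [TopologicalSpace β] [ContinuousAdd β] [T2Space β]
    [MeasurableSpace β] [MeasurableAdd₂ β] {f : E → β} (hf : Measurable f)
    (hfS : support f ⊆ ⋃ j, S j) : Measurable (fiberSum F f) := by
  rw [fiberSum_eq_sum_indicator hS.pairwise_disjoint hS.injOn hfS]
  simpa only [← Finset.sum_apply] using Finset.measurable_sum _ fun j _ =>
    measurable_indicator_image_comp_invFunOn hF (hS.measurableSet j) (hS.injOn j) hf

lemma lintegral_fiberSum (hS : InjOnMeasurablePieces F S) (hF : Differentiable ℝ F)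
    (μ : Measure E) [μ.IsAddHaarMeasure] {h : E → ℝ≥0∞} (hh : Measurable h)
    (hhS : support h ⊆ ⋃ j, S j) :
    ∫⁻ x, fiberSum F h x ∂μ = ∫⁻ y, ENNReal.ofReal |(fderiv ℝ F y).det| * h y ∂μ := by
  have hF' : ∀ j, ∀ y ∈ S j, HasFDerivWithinAt F (fderiv ℝ F y) (S j) y :=
    fun j y _ => (hF y).hasFDerivAt.hasFDerivWithinAt
  simp_rw [fiberSum_eq_sum_indicator hS.pairwise_disjoint hS.injOn hhS, Finset.sum_apply]
  rw [lintegral_finsetSum _ fun j _ =>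
    measurable_indicator_image_comp_invFunOn hF (hS.measurableSet j) (hS.injOn j) hh]
  calc ∑ j, ∫⁻ x, (F '' S j).indicator (h ∘ invFunOn F (S j)) x ∂μ
      = ∑ j, ∫⁻ y in S j, ENNReal.ofReal |(fderiv ℝ F y).det| * h y ∂μ := by
        refine Finset.sum_congr rfl fun j _ => ?_
        rw [lintegral_indicator (measurable_image_of_fderivWithin (hS.measurableSet j) (hF' j)
          (hS.injOn j)), lintegral_image_eq_lintegral_abs_det_fderiv_mul μ (hS.measurableSet j)
          (hF' j) (hS.injOn j)]
        refine setLIntegral_congr_fun (hS.measurableSet j) fun y hy => ?_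
        rw [comp_apply, (hS.injOn j).leftInvOn_invFunOn hy]
    _ = ∫⁻ y in ⋃ j, S j, ENNReal.ofReal |(fderiv ℝ F y).det| * h y ∂μ := by
        rw [lintegral_iUnion hS.measurableSet hS.pairwise_disjoint, tsum_fintype]
    _ = ∫⁻ y, ENNReal.ofReal |(fderiv ℝ F y).det| * h y ∂μ :=
        setLIntegral_eq_of_support_subset ((support_mul_subset_right _ _).trans hhS)

end InjOnMeasurablePieces

lemma eLpNorm_le_of_lintegral_rpow_le {α β γ : Type*} [MeasurableSpace α] {μ : Measure α}
    [NormedAddCommGroup β] [NormedAddCommGroup γ] {p : ℝ≥0∞} (hp₀ : p ≠ 0) (hp : p ≠ ∞)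
    {g : α → β} {u : α → γ} {K B : ℝ≥0∞}
    (h : ∫⁻ x, ‖g x‖ₑ ^ p.toReal ∂μ ≤ K ^ p.toReal * B * ∫⁻ x, ‖u x‖ₑ ^ p.toReal ∂μ) :
    eLpNorm g p μ ≤ K * B ^ p.toReal⁻¹ * eLpNorm u p μ := by
  have hr : 0 < p.toReal := ENNReal.toReal_pos hp₀ hp
  rw [eLpNorm_eq_lintegral_rpow_enorm_toReal hp₀ hp, eLpNorm_eq_lintegral_rpow_enorm_toReal hp₀ hp]
  calc (∫⁻ x, ‖g x‖ₑ ^ p.toReal ∂μ) ^ (1 / p.toReal)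
      ≤ (K ^ p.toReal * B * ∫⁻ x, ‖u x‖ₑ ^ p.toReal ∂μ) ^ (1 / p.toReal) := by gcongr
    _ = K * B ^ p.toReal⁻¹ * (∫⁻ x, ‖u x‖ₑ ^ p.toReal ∂μ) ^ (1 / p.toReal) := by
      rw [ENNReal.mul_rpow_of_nonneg _ _ (by positivity),
        ENNReal.mul_rpow_of_nonneg _ _ (by positivity), ← ENNReal.rpow_mul,
        mul_one_div_cancel hr.ne', ENNReal.rpow_one, one_div]

section Estimate

variable {β γ : Type*} [NormedAddCommGroup β] [NormedAddCommGroup γ] (μ : Measure E)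
  [μ.IsAddHaarMeasure] {f : E → β} {u : E → γ} {w : E → ℝ≥0∞} {M A B : ℝ≥0∞}

lemma eLpNorm_top_fiberSum_le (hF : Differentiable ℝ F)
    (hf : ∀ y, ‖f y‖ₑ ≤ M * (w y * ‖u y‖ₑ)) (hA : ∀ x, fiberSum F w x ≤ A) :
    eLpNorm (fiberSum F f) ∞ μ ≤ M * A * eLpNorm u ∞ μ := by
  rw [eLpNorm_exponent_top, eLpNorm_exponent_top]
  refine essSup_le_of_ae_le _ ?_
  filter_upwards [hF.ae_forall_fiber μ (ae_le_eLpNormEssSup (f := u))] with x hx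
  calc ‖fiberSum F f x‖ₑ ≤ M * fiberSum F (fun y => w y * ‖u y‖ₑ) x := enorm_fiberSum_le hf x
    _ ≤ M * (fiberSum F w x * eLpNormEssSup u μ) := by
      rw [fiberSum, fiberSum, ← ENNReal.tsum_mul_right]
      gcongr with y
      exact hx y y.2
    _ ≤ M * A * eLpNormEssSup u μ := by
      rw [← mul_assoc]
      gcongr
      exact hA x

lemma eLpNorm_fiberSum_le_of_ne_top {ι : Type*} [Fintype ι] {S : ι → Set E}
    (hS : InjOnMeasurablePieces F S) (hF : Differentiable ℝ F) (hu : StronglyMeasurable u)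
    (hw : Measurable w) (hwS : support w ⊆ ⋃ j, S j)
    (hf : ∀ y, ‖f y‖ₑ ≤ M * (w y * ‖u y‖ₑ)) (hA : ∀ x, fiberSum F w x ≤ A)
    (hB : ∀ y, ENNReal.ofReal |(fderiv ℝ F y).det| * w y ≤ B) {p : ℝ≥0∞} (hp : 1 ≤ p)
    (hp_top : p ≠ ∞) :
    eLpNorm (fiberSum F f) p μ ≤ M * A ^ (1 - p.toReal⁻¹) * B ^ p.toReal⁻¹ * eLpNorm u p μ := by
  set r := p.toReal
  have hr : 1 ≤ r := by simpa using ENNReal.toReal_mono hp_top hp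
  have hr' : 0 ≤ 1 - r⁻¹ := sub_nonneg.2 (inv_le_one_of_one_le₀ hr)
  refine eLpNorm_le_of_lintegral_rpow_le (zero_lt_one.trans_le hp).ne' hp_top ?_
  set Φ := fiberSum F fun y => w y * ‖u y‖ₑ ^ r
  have hΦ : ∀ x, ‖fiberSum F f x‖ₑ ≤ M * A ^ (1 - r⁻¹) * Φ x ^ r⁻¹ := fun x => calc
    ‖fiberSum F f x‖ₑ ≤ M * fiberSum F (fun y => w y * ‖u y‖ₑ) x := enorm_fiberSum_le hf x
    _ ≤ M * (fiberSum F w x ^ (1 - r⁻¹) * Φ x ^ r⁻¹) := by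
      gcongr
      exact ENNReal.inner_le_weight_mul_Lp_tsum hr _ _
    _ ≤ M * A ^ (1 - r⁻¹) * Φ x ^ r⁻¹ := by
      rw [← mul_assoc]
      gcongr
      exact hA x
  have hmeas : Measurable fun y => w y * ‖u y‖ₑ ^ r := hw.mul (hu.enorm.pow_const r)
  have hsupp : support (fun y => w y * ‖u y‖ₑ ^ r) ⊆ ⋃ j, S j :=
    (support_mul_subset_left _ _).trans hwS
  calc ∫⁻ x, ‖fiberSum F f x‖ₑ ^ r ∂μ
      ≤ ∫⁻ x, (M * A ^ (1 - r⁻¹)) ^ r * Φ x ∂μ := lintegral_mono fun x => by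
        grw [hΦ x, ENNReal.mul_rpow_of_nonneg _ _ (by positivity), ← ENNReal.rpow_mul,
          inv_mul_cancel₀ (by positivity), ENNReal.rpow_one]
    _ = (M * A ^ (1 - r⁻¹)) ^ r * ∫⁻ y, ENNReal.ofReal |(fderiv ℝ F y).det| *
          (w y * ‖u y‖ₑ ^ r) ∂μ := by
      rw [lintegral_const_mul _ (hS.measurable_fiberSum hF hmeas hsupp),
        hS.lintegral_fiberSum hF μ hmeas hsupp]
    _ ≤ (M * A ^ (1 - r⁻¹)) ^ r * ∫⁻ y, B * ‖u y‖ₑ ^ r ∂μ := by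
      refine mul_le_mul_right (lintegral_mono fun y => ?_) _
      rw [← mul_assoc]
      exact mul_le_mul_left (hB y) _
    _ = (M * A ^ (1 - r⁻¹)) ^ r * B * ∫⁻ y, ‖u y‖ₑ ^ r ∂μ := by
      rw [lintegral_const_mul _ (hu.enorm.pow_const r), mul_assoc]

lemma eLpNorm_fiberSum_le {ι : Type*} [Fintype ι] {S : ι → Set E}
    (hS : InjOnMeasurablePieces F S) (hF : Differentiable ℝ F) (hu : StronglyMeasurable u)
    (hw : Measurable w) (hwS : support w ⊆ ⋃ j, S j)
    (hf : ∀ y, ‖f y‖ₑ ≤ M * (w y * ‖u y‖ₑ)) (hA : ∀ x, fiberSum F w x ≤ A)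
    (hB : ∀ y, ENNReal.ofReal |(fderiv ℝ F y).det| * w y ≤ B) {p : ℝ≥0∞} (hp : 1 ≤ p) :
    eLpNorm (fiberSum F f) p μ ≤
      M * A ^ (1 - (1 / p).toReal) * B ^ (1 / p).toReal * eLpNorm u p μ := by
  rcases eq_or_ne p ∞ with rfl | hp_top
  · simpa using eLpNorm_top_fiberSum_le μ hF hf hA
  · simpa [ENNReal.toReal_inv] using
      eLpNorm_fiberSum_le_of_ne_top μ hS hF hu hw hwS hf hA hB hp hp_top

end Estimate

end Measure

lemma Continuous.enorm_le_eLpNorm_top {α β : Type*} [TopologicalSpace α] [MeasurableSpace α]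
    {μ : Measure α} [μ.IsOpenPosMeasure] [NormedAddCommGroup β] {f : α → β} (hf : Continuous f)
    (x : α) : ‖f x‖ₑ ≤ eLpNorm f ∞ μ := by
  have hdense := (Measure.dense_of_ae (ae_le_eLpNormEssSup (μ := μ) (f := f))).closure_eq
  rw [(isClosed_le hf.enorm continuous_const).closure_eq] at hdense
  rw [eLpNorm_exponent_top]
  exact eq_univ_iff_forall.1 hdense x

lemma alphaConst_eq (d : ℕ) (F : Euc d → Euc d) (G : Euc d → ℂ) (p : ℝ≥0∞)
    (U U' : Set (Euc d)) :
    alphaConst d F G p U U' =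
      (⨆ x ∈ (F '' U') ∩ U, ∑' y : {y : Euc d // F y = x},
        ENNReal.ofReal (1 / |(fderiv ℝ F y).det|)) ^ (1 - (1/p).toReal) *
      eLpNorm (fun y => G y * (fderiv ℝ F y).det) ∞ volume := by
  unfold alphaConst
  split_ifs with hp
  · simp [hp]
  · rfl

section TransferOperator

variable {d : ℕ} {F : Euc d → Euc d} {G : Euc d → ℂ} {ι : Type*} [Fintype ι]
  {S : ι → Set (Euc d)} {u : Euc d → ℂ} {p : ℝ≥0∞}

lemma ofReal_abs_mul_ofReal_one_div_abs {t : ℝ} (ht : t ≠ 0) :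
    ENNReal.ofReal |t| * ENNReal.ofReal (1 / |t|) = 1 := by
  rw [← ENNReal.ofReal_mul (abs_nonneg t), mul_one_div_cancel (abs_ne_zero.2 ht),
    ENNReal.ofReal_one]

lemma enorm_eq_enorm_mul_real_mul_ofReal_one_div_abs (a : ℂ) {t : ℝ} (ht : t ≠ 0) :
    ‖a‖ₑ = ‖a * t‖ₑ * ENNReal.ofReal (1 / |t|) := by
  rw [enorm_mul, mul_assoc, ← ofReal_norm (t : ℂ), Complex.norm_real, Real.norm_eq_abs,
    ofReal_abs_mul_ofReal_one_div_abs ht, mul_one]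

lemma eLpNorm_fiberSum_mul_le_alphaConst (hF : ContDiff ℝ 1 F) (hG : Continuous G)
    (hS : InjOnMeasurablePieces F S) (hSG : ⋃ j, S j = tsupport G)
    (hdet : ∀ y ∈ tsupport G, (fderiv ℝ F y).det ≠ 0) {U U' : Set (Euc d)}
    (hGsupp : tsupport G ⊆ U' ∩ F ⁻¹' U) (hu : StronglyMeasurable u) (hp : 1 ≤ p) :
    eLpNorm (fiberSum F fun y => G y * u y) p volume ≤
      alphaConst d F G p U U' * eLpNorm u p volume := by
  have hdetc : Continuous fun y => (fderiv ℝ F y).det :=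
    ContinuousLinearMap.continuous_det.comp (hF.continuous_fderiv one_ne_zero)
  set M := eLpNorm (fun y => G y * (fderiv ℝ F y).det) ∞ volume
  set w := (tsupport G).indicator fun y => ENNReal.ofReal (1 / |(fderiv ℝ F y).det|)
  have hw : Measurable w := by
    have hdetm := hdetc.measurable
    refine Measurable.indicator ?_ (isClosed_tsupport G).measurableSet
    fun_prop
  have hf : ∀ y, ‖G y * u y‖ₑ ≤ M * (w y * ‖u y‖ₑ) := by
    intro y
    by_cases hy : y ∈ tsupport G
    · rw [enorm_mul, enorm_eq_enorm_mul_real_mul_ofReal_one_div_abs _ (hdet y hy),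
        show w y = _ from indicator_of_mem hy _, ← mul_assoc]
      gcongr
      exact (hG.mul (Complex.continuous_ofReal.comp hdetc)).enorm_le_eLpNorm_top y
    · simp [image_eq_zero_of_notMem_tsupport hy]
  have hA : ∀ x, fiberSum F w x ≤ ⨆ x ∈ (F '' U') ∩ U, ∑' y : {y : Euc d // F y = x},
      ENNReal.ofReal (1 / |(fderiv ℝ F y).det|) := by
    intro x
    by_cases hx : x ∈ (F '' U') ∩ U
    · refine le_trans ?_ (le_biSup _ hx)
      exact ENNReal.tsum_le_tsum fun y => indicator_le_self _ _ _
    · refine (fiberSum_eq_zero_of_notMem_image (F := F) (f := w) ?_).trans_le zero_le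
      rintro ⟨y, hy, rfl⟩
      have hyG := hGsupp (support_indicator_subset hy)
      exact hx ⟨mem_image_of_mem F hyG.1, hyG.2⟩
  have hB : ∀ y, ENNReal.ofReal |(fderiv ℝ F y).det| * w y ≤ 1 := by
    intro y
    by_cases hy : y ∈ tsupport G
    · rw [show w y = _ from indicator_of_mem hy _, ofReal_abs_mul_ofReal_one_div_abs (hdet y hy)]
    · simp [w, indicator_of_notMem hy]
  calc eLpNorm (fiberSum F fun y => G y * u y) p volume
      ≤ M * _ ^ (1 - (1 / p).toReal) * 1 ^ (1 / p).toReal * eLpNorm u p volume :=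
        eLpNorm_fiberSum_le volume hS (hF.differentiable one_ne_zero) hu hw
          (support_indicator_subset.trans hSG.ge) hf hA hB hp
    _ = alphaConst d F G p U U' * eLpNorm u p volume := by
        rw [alphaConst_eq, ENNReal.one_rpow, mul_one, mul_comm M]

lemma eLpNorm_fiberSum_mul_lt_top (hF : ContDiff ℝ 1 F) (hG : Continuous G)
    (hGc : HasCompactSupport G) (hS : InjOnMeasurablePieces F S) (hSG : ⋃ j, S j = tsupport G)
    (hu : StronglyMeasurable u) (hup : eLpNorm u p volume < ∞) (hp : 1 ≤ p) :
    eLpNorm (fiberSum F fun y => G y * u y) p volume < ∞ := by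
  obtain ⟨C, hC⟩ := hG.bounded_above_of_compact_support hGc
  obtain ⟨D, hD⟩ := hGc.isCompact.exists_bound_of_continuousOn
    (ContinuousLinearMap.continuous_det.comp (hF.continuous_fderiv one_ne_zero)).continuousOn
  set w := (tsupport G).indicator (1 : Euc d → ℝ≥0∞)
  have hwS : support w ⊆ ⋃ j, S j := support_indicator_subset.trans hSG.ge
  have hf : ∀ y, ‖G y * u y‖ₑ ≤ ENNReal.ofReal C * (w y * ‖u y‖ₑ) := by
    intro y
    by_cases hy : y ∈ tsupport G
    · rw [enorm_mul, show w y = 1 from indicator_of_mem hy _, one_mul, ← ofReal_norm]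
      gcongr
      exact hC y
    · simp [image_eq_zero_of_notMem_tsupport hy]
  have hA : ∀ x, fiberSum F w x ≤ Fintype.card ι * 1 :=
    fiberSum_le_card_mul hS.pairwise_disjoint hS.injOn
      (fun y => indicator_le_self' (fun _ _ => zero_le) y) hwS
  have hB : ∀ y, ENNReal.ofReal |(fderiv ℝ F y).det| * w y ≤ ENNReal.ofReal D := by
    intro y
    by_cases hy : y ∈ tsupport G
    · rw [show w y = 1 from indicator_of_mem hy _, mul_one]
      exact ENNReal.ofReal_le_ofReal (hD y hy)
    · simp [w, indicator_of_notMem hy]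
  refine (eLpNorm_fiberSum_le volume hS (hF.differentiable one_ne_zero) hu
    (measurable_one.indicator (isClosed_tsupport G).measurableSet) hwS hf hA hB hp).trans_lt ?_
  have hp' : (1 / p).toReal ≤ 1 := ENNReal.toReal_le_of_le_ofReal zero_le_one
    (by rw [ENNReal.ofReal_one, one_div]; exact ENNReal.inv_le_one.2 hp)
  refine ENNReal.mul_lt_top
    (ENNReal.mul_lt_top (ENNReal.mul_lt_top ENNReal.ofReal_lt_top ?_) ?_) hup
  · exact ENNReal.rpow_lt_top_of_nonneg (sub_nonneg.2 hp') (by simp)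
  · exact ENNReal.rpow_lt_top_of_nonneg ENNReal.toReal_nonneg ENNReal.ofReal_ne_top

end TransferOperator

lemma transferOp_eq_fiberSum (d : ℕ) (F : Euc d → Euc d) (G u : Euc d → ℂ) :
    transferOp d F G u = fiberSum F fun y => G y * u y := rfl

theorem transfer_operator_Lp_bound_general
    (d : ℕ) (U U' : Set (Euc d))
    (r : ℝ) (hr : 1 < r) (F : Euc d → Euc d) (hF : ContDiffHolder r F)
    (rt : ℝ)
    (G : Euc d → ℂ) (hG : ContDiffHolder rt G)
    (hGsupp : tsupport G ⊆ U' ∩ F ⁻¹' U)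
    (N : ℕ) (K V : Fin N → Set (Euc d))
    (hKcomp : ∀ j, IsCompact (K j))
    (hKunion : (⋃ j, K j) = tsupport G)
    (hKV : ∀ j, K j ⊆ V j)
    (hFinj : ∀ j, Set.InjOn F (V j))
    (hFdet : ∀ j, ∀ x ∈ V j, (fderiv ℝ F x).det ≠ 0) :
    ∀ p : ℝ≥0∞, 1 ≤ p → ∀ u : Euc d → ℂ, MemLp u p volume →
      MemLp (transferOp d F G u) p volume ∧
      eLpNorm (transferOp d F G u) p volume ≤
        alphaConst d F G p U U' * eLpNorm u p volume ∧
      tsupport (transferOp d F G u) ⊆ U := by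
  intro p hp u hu
  have hF1 : ContDiff ℝ 1 F :=
    hF.1.of_le (by exact_mod_cast Nat.le_floor (by exact_mod_cast hr.le))
  have hFd : Differentiable ℝ F := hF1.differentiable one_ne_zero
  have hGc : Continuous G := hG.1.continuous
  have hGcs : HasCompactSupport G := by
    rw [HasCompactSupport, ← hKunion]
    exact isCompact_iUnion hKcomp
  have hS : InjOnMeasurablePieces F (disjointed K) :=
    .disjointed (fun j => (hKcomp j).measurableSet) fun j => (hFinj j).mono (hKV j)
  have hSG : ⋃ j, disjointed K j = tsupport G := iUnion_disjointed.trans hKunion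
  have hdet : ∀ y ∈ tsupport G, (fderiv ℝ F y).det ≠ 0 := fun y hy => by
    obtain ⟨j, hj⟩ := mem_iUnion.1 (hKunion ▸ hy)
    exact hFdet j y (hKV j hj)
  obtain ⟨u', hu', huu'⟩ := hu.1
  simp only [transferOp_eq_fiberSum]
  have hLu : (fiberSum F fun y => G y * u y) =ᵐ[volume] fiberSum F fun y => G y * u' y :=
    fiberSum_ae_congr hFd ((EventuallyEq.refl _ G).mul huu')
  rw [eLpNorm_congr_ae hLu, eLpNorm_congr_ae huu']
  refine ⟨⟨.congr ?_ hLu.symm, ?_⟩, ?_, ?_⟩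
  · exact (hS.measurable_fiberSum hFd (hGc.measurable.mul hu'.measurable)
      ((support_mul_subset_left _ _).trans ((subset_tsupport G).trans hSG.ge))).aestronglyMeasurable
  · exact eLpNorm_congr_ae hLu ▸ eLpNorm_fiberSum_mul_lt_top hF1 hGc hGcs hS hSG hu'
      (eLpNorm_congr_ae huu' ▸ hu.2) hp
  · exact eLpNorm_fiberSum_mul_le_alphaConst hF1 hGc hS hSG hdet hGsupp hu' hp
  · refine (tsupport_fiberSum_subset hF1.continuous hGcs.mul_right).trans ?_
    rintro _ ⟨y, hy, rfl⟩
    exact (hGsupp (tsupport_mul_subset_left hy)).2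

/-- for every p ∈ [1,∞] the transfer operator L_{F,G} is bounded from
L^p(ℝ^d) to L^p(ℝ^d) with ‖L_{F,G}u‖_{L^p} ≤ α·‖u‖_{L^p}, and supp(L_{F,G}u) ⊆ U. -/
theorem transfer_operator_Lp_bound
    (d : ℕ) (hd : 1 ≤ d) (U U' : Set (Euc d))
    (hUopen : IsOpen U) (hU'open : IsOpen U')
    (hUne : U.Nonempty) (hU'ne : U'.Nonempty)
    (hUbdd : Bornology.IsBounded U) (hU'bdd : Bornology.IsBounded U')
    (r : ℝ) (hr : 1 < r) (F : Euc d → Euc d) (hF : ContDiffHolder r F)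
    (hne : (U' ∩ F ⁻¹' U).Nonempty)
    (rt : ℝ) (hrt0 : 0 < rt) (hrtr : rt ≤ r)
    (G : Euc d → ℂ) (hG : ContDiffHolder rt G)
    (hGsupp : tsupport G ⊆ U' ∩ F ⁻¹' U)
    (N : ℕ) (K V : Fin N → Set (Euc d))
    (hKcomp : ∀ j, IsCompact (K j))
    (hKdisj : ∀ i j, i ≠ j → interior (K i) ∩ interior (K j) = ∅)
    (hKunion : (⋃ j, K j) = tsupport G)
    (hVopen : ∀ j, IsOpen (V j)) (hKV : ∀ j, K j ⊆ V j)
    (hFinj : ∀ j, Set.InjOn F (V j))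
    (hFdet : ∀ j, ∀ x ∈ V j, (fderiv ℝ F x).det ≠ 0) :
    ∀ p : ℝ≥0∞, 1 ≤ p → ∀ u : Euc d → ℂ, MemLp u p volume →
      MemLp (transferOp d F G u) p volume ∧
      eLpNorm (transferOp d F G u) p volume ≤
        alphaConst d F G p U U' * eLpNorm u p volume ∧
      tsupport (transferOp d F G u) ⊆ U :=
  transfer_operator_Lp_bound_general d U U' r hr F hF rt G hG hGsupp N K V hKcomp hKunion hKV hFinj
    hFdet

end
end

section
/- Let φ: ℝ^d → ℝ be a C^2 function and h: ℝ^d → ℂ a compactly supported C^1 function such that ∑_{j=1}^d (∂_j φ(w))^2 ≠ 0 for all w in the support of h. Define h_k^φ(w) = i·∂_k φ(w)·h(w) / ∑_{j=1}^d (∂_j φ(w))^2 for k = 1, …, d. Then ∫_{ℝ^d} e^{iφ(w)}·h(w) dw = ∫_{ℝ^d} e^{iφ(w)}·∑_{k=1}^d ∂_k h_k^φ(w) dw. -/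
open MeasureTheory Filter Set
open scoped ENNReal Topology

noncomputable section

/-- the partial derivative ∂_k of a function on ℝ^d. -/
def pderivK {d : ℕ} {F : Type*} [NormedAddCommGroup F] [NormedSpace ℝ F]
    (k : Fin d) (f : Euc d → F) (w : Euc d) : F :=
  fderiv ℝ f w (EuclideanSpace.single k 1)

/-!
With `e = exp (i φ)` one has `∂ₖ e = i ∂ₖφ · e`, and the amplitudes `h_k^φ` are chosen so
that `∑ₖ h_k^φ · i ∂ₖφ = i² h = -h`. Integrating by parts in each direction against the
compactly supported `C¹` function `h_k^φ` (it is `C¹` because its denominator does not vanish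
on the support of `h`) gives `∫ e ∑ₖ ∂ₖ h_k^φ = -∫ ∑ₖ ∂ₖ e · h_k^φ = ∫ e h`.
-/

open Complex

section IntegrationByParts

variable {E : Type*} [NormedAddCommGroup E] [NormedSpace ℝ E] [MeasurableSpace E]
  {μ : Measure E} {𝕜 : Type*} [NormedField 𝕜] [NormedAlgebra ℝ 𝕜]

theorem integrable_mul_fderiv_of_hasCompactSupport [OpensMeasurableSpace E]
    [IsFiniteMeasureOnCompacts μ] {f g : E → 𝕜} (hf : Continuous f)
    (hg : ContDiff ℝ 1 g) (hgc : HasCompactSupport g) (v : E) :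
    Integrable (fun x => f x * fderiv ℝ g x v) μ :=
  Continuous.integrable_of_hasCompactSupport
    (hf.mul ((hg.continuous_fderiv one_ne_zero).clm_apply continuous_const))
    (hgc.fderiv_apply ℝ v).mul_left

theorem integrable_fderiv_mul_of_hasCompactSupport [OpensMeasurableSpace E]
    [IsFiniteMeasureOnCompacts μ] {f g : E → 𝕜} (hf : ContDiff ℝ 1 f)
    (hg : Continuous g) (hgc : HasCompactSupport g) (v : E) :
    Integrable (fun x => fderiv ℝ f x v * g x) μ :=
  Continuous.integrable_of_hasCompactSupport
    (((hf.continuous_fderiv one_ne_zero).clm_apply continuous_const).mul hg) hgc.mul_left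

variable [FiniteDimensional ℝ E] [BorelSpace E] [μ.IsAddHaarMeasure]

theorem integral_mul_fderiv_eq_neg_fderiv_mul_of_hasCompactSupport {f g : E → 𝕜}
    (hf : ContDiff ℝ 1 f) (hg : ContDiff ℝ 1 g) (hgc : HasCompactSupport g) (v : E) :
    ∫ x, f x * fderiv ℝ g x v ∂μ = -∫ x, fderiv ℝ f x v * g x ∂μ :=
  integral_mul_fderiv_eq_neg_fderiv_mul_of_integrable
    (integrable_fderiv_mul_of_hasCompactSupport hf hg.continuous hgc v)
    (integrable_mul_fderiv_of_hasCompactSupport hf.continuous hg hgc v)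
    ((hf.continuous.mul hg.continuous).integrable_of_hasCompactSupport hgc.mul_left)
    (fun x _ => hf.differentiable one_ne_zero x) (fun x _ => hg.differentiable one_ne_zero x)

theorem integral_mul_sum_fderiv_eq_neg_sum_fderiv_mul_of_hasCompactSupport {ι : Type*}
    (s : Finset ι) {f : E → 𝕜} {g : ι → E → 𝕜} (hf : ContDiff ℝ 1 f)
    (hg : ∀ i, ContDiff ℝ 1 (g i)) (hgc : ∀ i, HasCompactSupport (g i)) (v : ι → E) :
    ∫ x, f x * ∑ i ∈ s, fderiv ℝ (g i) x (v i) ∂μ =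
      -∫ x, ∑ i ∈ s, fderiv ℝ f x (v i) * g i x ∂μ := by
  simp only [Finset.mul_sum]
  rw [integral_finsetSum _ fun i _ =>
      integrable_mul_fderiv_of_hasCompactSupport hf.continuous (hg i) (hgc i) (v i),
    integral_finsetSum _ fun i _ =>
      integrable_fderiv_mul_of_hasCompactSupport hf (hg i).continuous (hgc i) (v i),
    ← Finset.sum_neg_distrib]
  exact Finset.sum_congr rfl fun i _ =>
    integral_mul_fderiv_eq_neg_fderiv_mul_of_hasCompactSupport hf (hg i) (hgc i) (v i)

end IntegrationByParts

theorem ContDiff.div_of_ne_zero_on_tsupport {𝕜 E 𝕜' : Type*} [NontriviallyNormedField 𝕜]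
    [NormedAddCommGroup E] [NormedSpace 𝕜 E] [NormedField 𝕜'] [NormedAlgebra 𝕜 𝕜']
    {n : WithTop ℕ∞} {f g : E → 𝕜'} (hf : ContDiff 𝕜 n f) (hg : ContDiff 𝕜 n g)
    (h0 : ∀ x ∈ tsupport f, g x ≠ 0) : ContDiff 𝕜 n fun x => f x / g x := by
  rw [contDiff_iff_contDiffAt]
  intro x
  by_cases hx : x ∈ tsupport f
  · simpa only [div_eq_mul_inv] using hf.contDiffAt.mul (hg.contDiffAt.fun_inv (h0 x hx))
  · refine contDiffAt_const (c := (0 : 𝕜')).congr_of_eventuallyEq ?_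
    filter_upwards [notMem_tsupport_iff_eventuallyEq.mp hx] with y hy
    simp [hy]

theorem contDiff_pderivK {d : ℕ} {F : Type*} [NormedAddCommGroup F] [NormedSpace ℝ F]
    {m n : WithTop ℕ∞} {f : Euc d → F} (hf : ContDiff ℝ n f) (hmn : m + 1 ≤ n) (k : Fin d) :
    ContDiff ℝ m (pderivK k f) :=
  (hf.fderiv_right hmn).clm_apply contDiff_const

theorem pderivK_cexp_I_mul {d : ℕ} {φ : Euc d → ℝ} {w : Euc d} (hφ : DifferentiableAt ℝ φ w)
    (k : Fin d) :
    pderivK k (fun w => cexp (I * φ w)) w = cexp (I * φ w) * (I * pderivK k φ w) := by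
  have : HasFDerivAt (fun w => cexp (I * φ w)) _ w :=
    ((ofRealCLM.hasFDerivAt.comp w hφ.hasFDerivAt).const_mul I).cexp
  simp [pderivK, this.fderiv]

/-- The amplitude `h_k^φ` of the paper. -/
def ibpField {d : ℕ} (φ : Euc d → ℝ) (h : Euc d → ℂ) (k : Fin d) (w : Euc d) : ℂ :=
  I * pderivK k φ w * h w / (∑ j : Fin d, pderivK j φ w ^ 2 : ℝ)

section ibpField

variable {d : ℕ} {φ : Euc d → ℝ} {h : Euc d → ℂ}

theorem ibpField_eq_zero_of_eq_zero {w : Euc d} (hw : h w = 0) (k : Fin d) :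
    ibpField φ h k w = 0 := by
  simp [ibpField, hw]

theorem HasCompactSupport.ibpField (hh : HasCompactSupport h) (k : Fin d) :
    HasCompactSupport (ibpField φ h k) :=
  hh.mono fun _ hw hhw => hw (ibpField_eq_zero_of_eq_zero hhw k)

theorem contDiff_ibpField (hφ : ContDiff ℝ 2 φ) (hh : ContDiff ℝ 1 h)
    (hnz : ∀ w ∈ tsupport h, ∑ j : Fin d, pderivK j φ w ^ 2 ≠ 0) (k : Fin d) :
    ContDiff ℝ 1 (ibpField φ h k) := by
  have hψ (j : Fin d) : ContDiff ℝ 1 (pderivK j φ) := contDiff_pderivK hφ (by norm_num) j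
  have hS : ContDiff ℝ 1 fun w => ∑ j : Fin d, pderivK j φ w ^ 2 := by fun_prop
  refine ContDiff.div_of_ne_zero_on_tsupport ?_ ?_ fun w hw => ?_
  · exact (contDiff_const.mul (ofRealCLM.contDiff.comp (hψ k))).mul hh
  · exact ofRealCLM.contDiff.comp hS
  · exact ofReal_ne_zero.mpr (hnz w (tsupport_mul_subset_right hw))

theorem sum_ibpField_mul_I_mul_pderivK {w : Euc d}
    (hw : ∑ j : Fin d, pderivK j φ w ^ 2 = 0 → h w = 0) :
    ∑ k : Fin d, ibpField φ h k w * (I * pderivK k φ w) = -h w := by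
  by_cases hS : ∑ j : Fin d, pderivK j φ w ^ 2 = 0
  · simp [ibpField_eq_zero_of_eq_zero (hw hS), hw hS]
  · have hS' : ((∑ j : Fin d, pderivK j φ w ^ 2 : ℝ) : ℂ) ≠ 0 := ofReal_ne_zero.mpr hS
    calc ∑ k : Fin d, ibpField φ h k w * (I * pderivK k φ w)
        = I ^ 2 * h w * ((∑ k : Fin d, pderivK k φ w ^ 2 : ℝ) : ℂ) /
            ((∑ j : Fin d, pderivK j φ w ^ 2 : ℝ) : ℂ) := by
          simp only [ibpField, Finset.mul_sum, Finset.sum_div, ofReal_sum, ofReal_pow]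
          exact Finset.sum_congr rfl fun k _ => by ring
      _ = -h w := by rw [mul_div_assoc, div_self hS', I_sq]; ring

theorem cexp_I_mul_mul_eq_neg_sum_pderivK_mul_ibpField {w : Euc d}
    (hφ : DifferentiableAt ℝ φ w) (hw : ∑ j : Fin d, pderivK j φ w ^ 2 = 0 → h w = 0) :
    cexp (I * φ w) * h w =
      -∑ k : Fin d, pderivK k (fun w => cexp (I * φ w)) w * ibpField φ h k w := by
  rw [← neg_neg (h w), ← sum_ibpField_mul_I_mul_pderivK hw, mul_neg, Finset.mul_sum]
  congr 1
  refine Finset.sum_congr rfl fun k _ => ?_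
  rw [pderivK_cexp_I_mul hφ]
  ring

end ibpField

/-- integration by parts for oscillatory integrals: with
h_k^φ(w) = i·∂_k φ(w)·h(w) / ∑_j (∂_j φ(w))², one has
∫ e^{iφ(w)} h(w) dw = ∫ e^{iφ(w)} ∑_k ∂_k h_k^φ(w) dw. -/
theorem oscillatory_integration_by_parts
    (d : ℕ) (φ : Euc d → ℝ) (h : Euc d → ℂ)
    (hφ : ContDiff ℝ 2 φ) (hh : ContDiff ℝ 1 h) (hhc : HasCompactSupport h)
    (hnz : ∀ w ∈ tsupport h, ∑ j : Fin d, (pderivK j φ w) ^ 2 ≠ 0) :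
    ∫ w : Euc d, Complex.exp (Complex.I * φ w) * h w =
      ∫ w : Euc d, Complex.exp (Complex.I * φ w) *
        ∑ k : Fin d,
          pderivK k (fun w' : Euc d =>
            Complex.I * Complex.ofReal (pderivK k φ w') * h w' /
              Complex.ofReal (∑ j : Fin d, (pderivK j φ w') ^ 2)) w := by
  have he : ContDiff ℝ 1 fun w => cexp (I * φ w) :=
    (contDiff_const.mul (ofRealCLM.contDiff.comp (hφ.of_le one_le_two))).cexp
  calc ∫ w, cexp (I * φ w) * h w
      = -∫ w, ∑ k : Fin d, pderivK k (fun w => cexp (I * φ w)) w * ibpField φ h k w := by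
        rw [← integral_neg]
        congr 1 with w
        exact cexp_I_mul_mul_eq_neg_sum_pderivK_mul_ibpField (hφ.differentiable two_ne_zero w)
          fun hS => by_contra fun hw => hnz w (subset_tsupport h hw) hS
    _ = _ := (integral_mul_sum_fderiv_eq_neg_sum_fderiv_mul_of_hasCompactSupport Finset.univ he
        (contDiff_ibpField hφ hh hnz) hhc.ibpField _).symm
end
end

section
/- Let c̃ > 0, let T: ℝ^d → ℝ^d be a map with |T(x) − T(y)| ≥ c̃|x − y| for all x, y ∈ ℝ^d, and let K ⊂ ℝ^d be a compact set. Then there exists a constant C > 0, depending only on d, c̃ and K, such that for all integers n ≥ ℓ ≥ 0 and all x, y ∈ ℝ^d: 2^{dn}·∫_K b(2^n(x − w))·b(2^ℓ(T(w) − T(y))) dw ≤ C·b(2^ℓ(x − y)). -/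
/-!
Write `b = ρ(|·|)` with `ρ(r) = max(1, r)^{-(d+1)}`. By the triangle inequality, half of
`u = 2^ℓ|x - y|` is carried either by `2^ℓ|w - y|` or by `2^ℓ|x - w|`. In the first case the
expansion of `T` and the doubling property of `ρ` bound the second factor by a multiple of `ρ(u)`.
In the second case the first factor is bounded by a multiple of `2^{-(n-ℓ)(d+1)} ρ(u)` when
`u ≥ 2`, while for `u ≤ 2` simply `1 ≤ 2^{d+1} ρ(u)`. So the integrand is dominated by `ρ(u)`
times a combination of `b(2^n(x - w))` and `b(c̃ 2^ℓ (w - y))`, whose integrals over all of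
`ℝ^d` are computed by scaling.
-/

open MeasureTheory Filter Set
open scoped ENNReal Topology

noncomputable section

/-- b(x) = 1 for |x| ≤ 1 and |x|^{−d−1} for |x| > 1. -/
def bFun (d : ℕ) (x : Euc d) : ℝ :=
  if ‖x‖ ≤ 1 then 1 else ‖x‖ ^ (-(d : ℝ) - 1)

def bProfile (d : ℕ) (r : ℝ) : ℝ := ((max 1 r) ^ (d + 1))⁻¹

section Profile

variable {d : ℕ}

lemma bProfile_pos (d : ℕ) (r : ℝ) : 0 < bProfile d r := by
  unfold bProfile; positivity

lemma bProfile_le_one (d : ℕ) (r : ℝ) : bProfile d r ≤ 1 :=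
  inv_le_one_of_one_le₀ (one_le_pow₀ (le_max_left 1 r))

lemma bProfile_antitone (d : ℕ) : Antitone (bProfile d) := fun _ _ h => by
  unfold bProfile; gcongr

lemma continuous_bProfile (d : ℕ) : Continuous (bProfile d) := by
  unfold bProfile
  exact ((continuous_const.max continuous_id).pow _).inv₀ fun r =>
    (pow_pos (lt_max_of_lt_left one_pos) _).ne'

lemma bProfile_mul_le_of_le_one {a : ℝ} (ha₀ : 0 < a) (ha₁ : a ≤ 1) (r : ℝ) :
    bProfile d (a * r) ≤ (a ^ (d + 1))⁻¹ * bProfile d r := by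
  unfold bProfile
  rw [← mul_inv, ← mul_pow]
  gcongr
  rw [mul_max_of_nonneg _ _ ha₀.le, mul_one]
  exact max_le_max_right _ ha₁

lemma bProfile_mul_le_of_one_le {a r : ℝ} (ha : 0 < a) (hr : 1 ≤ r) :
    bProfile d (a * r) ≤ (a ^ (d + 1))⁻¹ * bProfile d r := by
  unfold bProfile
  rw [← mul_inv, ← mul_pow, max_eq_right hr]
  gcongr
  exact le_max_right _ _

lemma one_le_two_pow_mul_bProfile {r : ℝ} (hr : r ≤ 2) : 1 ≤ 2 ^ (d + 1) * bProfile d r := by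
  have h2 : bProfile d 2 = (2 ^ (d + 1))⁻¹ := by norm_num [bProfile]
  calc (1 : ℝ) = 2 ^ (d + 1) * bProfile d 2 := by rw [h2, mul_inv_cancel₀ (by positivity)]
    _ ≤ 2 ^ (d + 1) * bProfile d r := by gcongr; exact bProfile_antitone d hr

lemma bProfile_le_two_pow_mul {r : ℝ} (hr : 0 ≤ r) :
    bProfile d r ≤ 2 ^ (d + 1) * ((1 + r) ^ (d + 1))⁻¹ := by
  rw [← inv_inv ((2 : ℝ) ^ (d + 1)), ← mul_inv, ← div_eq_inv_mul, ← div_pow, bProfile]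
  gcongr
  rw [div_le_iff₀ two_pos]
  linarith [le_max_left 1 r, le_max_right 1 r]

lemma bProfile_mul_bProfile_le {c M p q u : ℝ} (hc : 0 < c) (hM : 1 ≤ M) (hu : 0 ≤ u)
    (huq : u ≤ p + q) :
    bProfile d (M * p) * bProfile d (c * q) ≤
      bProfile d u * ((((min 1 (c / 2)) ^ (d + 1))⁻¹ + 2 ^ (d + 1)) * bProfile d (M * p) +
        2 ^ (d + 1) * (M ^ (d + 1))⁻¹ * bProfile d (c * q)) := by
  have hP := bProfile_pos d (M * p)
  have hQ := bProfile_pos d (c * q)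
  have hU := bProfile_pos d u
  have hκ : 0 < ((min 1 (c / 2)) ^ (d + 1))⁻¹ := by positivity
  have hMs : 0 < (M ^ (d + 1))⁻¹ := by positivity
  have hB : (0 : ℝ) < 2 ^ (d + 1) := by positivity
  have hUBP := mul_pos (mul_pos hU hB) hP
  have hUBMQ := mul_pos (mul_pos (mul_pos hU hB) hMs) hQ
  have hUκP := mul_pos (mul_pos hU hκ) hP
  rcases le_total (u / 2) q with hq | hp
  · have hQU : bProfile d (c * q) ≤ ((min 1 (c / 2)) ^ (d + 1))⁻¹ * bProfile d u := by
      refine (bProfile_antitone d ?_).trans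
        (bProfile_mul_le_of_le_one (by positivity) (min_le_left _ _) u)
      nlinarith [min_le_right 1 (c / 2)]
    linarith [mul_le_mul_of_nonneg_left hQU hP.le]
  rcases le_total u 2 with hu2 | hu2
  · have h1 := one_le_two_pow_mul_bProfile (d := d) hu2
    linarith [mul_le_mul_of_nonneg_left (bProfile_le_one d (c * q)) hP.le,
      mul_le_mul_of_nonneg_left h1 hP.le]
  · have hPU : bProfile d (M * p) ≤ 2 ^ (d + 1) * (M ^ (d + 1))⁻¹ * bProfile d u :=
      calc bProfile d (M * p) ≤ bProfile d (M * (u / 2)) :=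
            bProfile_antitone d (by nlinarith)
        _ ≤ (M ^ (d + 1))⁻¹ * bProfile d ((1 / 2) * u) := by
            rw [one_div_mul_eq_div]
            exact bProfile_mul_le_of_one_le (by positivity) (by linarith)
        _ ≤ (M ^ (d + 1))⁻¹ * (((1 / 2) ^ (d + 1))⁻¹ * bProfile d u) := by
            gcongr
            exact bProfile_mul_le_of_le_one (by norm_num) (by norm_num) u
        _ = 2 ^ (d + 1) * (M ^ (d + 1))⁻¹ * bProfile d u := by
            rw [one_div, inv_pow, inv_inv]; ring
    linarith [mul_le_mul_of_nonneg_right hPU hQ.le]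

end Profile

lemma bProfile_mul_bProfile_comp_le {E : Type*} [SeminormedAddCommGroup E] {d : ℕ}
    {c L M : ℝ} (hc : 0 < c) (hL : 0 < L) (hM : 1 ≤ M) {T : E → E}
    (hT : ∀ x y, c * ‖x - y‖ ≤ ‖T x - T y‖) (x y w : E) :
    bProfile d (M * L * ‖w - x‖) * bProfile d (L * ‖T w - T y‖) ≤
      bProfile d (L * ‖x - y‖) * ((((min 1 (c / 2)) ^ (d + 1))⁻¹ + 2 ^ (d + 1)) *
        bProfile d (M * L * ‖w - x‖) + 2 ^ (d + 1) * (M ^ (d + 1))⁻¹ *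
          bProfile d (c * L * ‖w - y‖)) := by
  have htri : L * ‖x - y‖ ≤ L * ‖w - x‖ + L * ‖w - y‖ := by
    rw [← mul_add, norm_sub_rev w x]
    exact mul_le_mul_of_nonneg_left (norm_sub_le_norm_sub_add_norm_sub x w y) hL.le
  have hexpand := bProfile_mul_bProfile_le (d := d) hc hM (by positivity) htri
  simp only [← mul_assoc] at hexpand
  refine le_trans (mul_le_mul_of_nonneg_left ?_ (bProfile_pos d _).le) hexpand
  refine bProfile_antitone d ?_
  linarith [mul_le_mul_of_nonneg_left (hT w y) hL.le]

lemma bProfile_mul_norm {E : Type*} [SeminormedAddCommGroup E] [NormedSpace ℝ E] {d : ℕ} {a : ℝ}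
    (ha : 0 ≤ a) (v : E) : bProfile d (a * ‖v‖) = bProfile d ‖a • v‖ := by
  rw [norm_smul, Real.norm_of_nonneg ha]

section Integral

open Module

variable {E : Type*} [NormedAddCommGroup E] [NormedSpace ℝ E] [FiniteDimensional ℝ E]
  [MeasurableSpace E] [BorelSpace E] (μ : Measure E) [μ.IsAddHaarMeasure] {d : ℕ}

lemma integrable_bProfile_norm (hd : finrank ℝ E ≤ d) :
    Integrable (fun x : E => bProfile d ‖x‖) μ := by
  have hdom := (integrable_one_add_norm (μ := μ) (r := d + 1)
    (by exact_mod_cast Nat.lt_succ_of_le hd)).const_mul (2 ^ (d + 1))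
  refine hdom.mono' ((continuous_bProfile d).comp continuous_norm).aestronglyMeasurable
    (ae_of_all _ fun x => ?_)
  rw [Real.norm_of_nonneg (bProfile_pos d _).le, Real.rpow_neg (by positivity),
    ← Nat.cast_succ, Real.rpow_natCast]
  exact bProfile_le_two_pow_mul (norm_nonneg x)

lemma integral_bProfile_norm_pos (hd : finrank ℝ E ≤ d) :
    0 < ∫ x, bProfile d ‖x‖ ∂μ := by
  rw [integral_pos_iff_support_of_nonneg (fun x => (bProfile_pos d _).le)
    (integrable_bProfile_norm μ hd), Function.support_eq_univ fun x => (bProfile_pos d _).ne']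
  exact Measure.measure_univ_pos.2 (NeZero.ne μ)

lemma integrable_bProfile_mul_norm_sub (hd : finrank ℝ E ≤ d) {a : ℝ} (ha : 0 < a) (z : E) :
    Integrable (fun w => bProfile d (a * ‖w - z‖)) μ := by
  simp_rw [bProfile_mul_norm ha.le]
  exact ((integrable_bProfile_norm μ hd).comp_smul ha.ne').comp_sub_right z

lemma integral_bProfile_mul_norm_sub {a : ℝ} (ha : 0 < a) (z : E) :
    ∫ w, bProfile d (a * ‖w - z‖) ∂μ = (a ^ finrank ℝ E)⁻¹ * ∫ w, bProfile d ‖w‖ ∂μ := by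
  simp_rw [bProfile_mul_norm ha.le]
  rw [integral_sub_right_eq_self (fun v => bProfile d ‖a • v‖) z,
    Measure.integral_comp_smul μ (fun v => bProfile d ‖v‖) a, smul_eq_mul,
    abs_of_pos (by positivity)]

theorem setIntegral_bProfile_mul_bProfile_comp_le (hd : finrank ℝ E = d) {c L M : ℝ}
    (hc : 0 < c) (hL : 0 < L) (hM : 1 ≤ M) {T : E → E}
    (hT : ∀ x y, c * ‖x - y‖ ≤ ‖T x - T y‖) (K : Set E) (x y : E) :
    (M * L) ^ d * ∫ w in K, bProfile d (M * L * ‖x - w‖) * bProfile d (L * ‖T w - T y‖) ∂μ ≤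
      (((min 1 (c / 2)) ^ (d + 1))⁻¹ + 2 ^ (d + 1) + 2 ^ (d + 1) * (c ^ d)⁻¹) *
        (∫ w, bProfile d ‖w‖ ∂μ) * bProfile d (L * ‖x - y‖) := by
  set g : E → ℝ := fun w => (((min 1 (c / 2)) ^ (d + 1))⁻¹ + 2 ^ (d + 1)) *
    bProfile d (M * L * ‖w - x‖) + 2 ^ (d + 1) * (M ^ (d + 1))⁻¹ * bProfile d (c * L * ‖w - y‖)
  have hgx := (integrable_bProfile_mul_norm_sub μ hd.le (a := M * L) (by positivity) x).const_mul
    (((min 1 (c / 2)) ^ (d + 1))⁻¹ + 2 ^ (d + 1))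
  have hgy := (integrable_bProfile_mul_norm_sub μ hd.le (a := c * L) (by positivity) y).const_mul
    (2 ^ (d + 1) * (M ^ (d + 1))⁻¹)
  have hg : Integrable (fun w => bProfile d (L * ‖x - y‖) * g w) μ := (hgx.add hgy).const_mul _
  have hpt : ∀ w, bProfile d (M * L * ‖x - w‖) * bProfile d (L * ‖T w - T y‖) ≤
      bProfile d (L * ‖x - y‖) * g w := fun w => by
    rw [norm_sub_rev x w]; exact bProfile_mul_bProfile_comp_le hc hL hM hT x y w
  have hf0 : ∀ w, 0 ≤ bProfile d (M * L * ‖x - w‖) * bProfile d (L * ‖T w - T y‖) :=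
    fun w => (mul_pos (bProfile_pos d _) (bProfile_pos d _)).le
  -- `(M L)^d (c L)^{-d} M^{-(d+1)} = c^{-d} / M`: the decay of the first factor pays for the
  -- mismatch of the two scales.
  have hgint : (M * L) ^ d * ∫ w, g w ∂μ = (((min 1 (c / 2)) ^ (d + 1))⁻¹ + 2 ^ (d + 1) +
      2 ^ (d + 1) * (c ^ d)⁻¹ / M) * ∫ w, bProfile d ‖w‖ ∂μ := by
    rw [integral_add hgx hgy, integral_const_mul, integral_const_mul,
      integral_bProfile_mul_norm_sub μ (by positivity) x,
      integral_bProfile_mul_norm_sub μ (by positivity) y, hd]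
    field_simp
    ring
  calc (M * L) ^ d * ∫ w in K, bProfile d (M * L * ‖x - w‖) * bProfile d (L * ‖T w - T y‖) ∂μ
      ≤ (M * L) ^ d * ∫ w, bProfile d (L * ‖x - y‖) * g w ∂μ := by
        gcongr
        exact (integral_mono_of_nonneg (ae_of_all _ hf0) hg.integrableOn (ae_of_all _ hpt)).trans
          (setIntegral_le_integral hg (ae_of_all _ fun w => (hf0 w).trans (hpt w)))
    _ = bProfile d (L * ‖x - y‖) * ((M * L) ^ d * ∫ w, g w ∂μ) := by
        rw [integral_const_mul]; ring
    _ ≤ _ := by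
        rw [hgint, mul_comm]
        gcongr
        · exact (bProfile_pos d _).le
        · exact (integral_bProfile_norm_pos μ hd.le).le
        · exact div_le_self (by positivity) hM

end Integral

lemma bFun_eq_bProfile (d : ℕ) (x : Euc d) : bFun d x = bProfile d ‖x‖ := by
  unfold bFun bProfile
  split_ifs with h
  · rw [max_eq_left h, one_pow, inv_one]
  · rw [max_eq_right (not_le.1 h).le, show -(d : ℝ) - 1 = -((d + 1 : ℕ) : ℝ) by push_cast; ring,
      Real.rpow_neg (by positivity), Real.rpow_natCast]

theorem convolution_kernel_estimate_general
    (d : ℕ) (ctil : ℝ) (hctil : 0 < ctil)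
    (K : Set (Euc d)) :
    ∃ C > (0:ℝ), ∀ T : Euc d → Euc d,
      (∀ x y : Euc d, ctil * ‖x - y‖ ≤ ‖T x - T y‖) →
      ∀ n ℓ : ℕ, ℓ ≤ n → ∀ x y : Euc d,
        (2:ℝ) ^ (d * n) *
            ∫ w in K, bFun d ((2:ℝ) ^ n • (x - w)) * bFun d ((2:ℝ) ^ ℓ • (T w - T y))
          ≤ C * bFun d ((2:ℝ) ^ ℓ • (x - y)) := by
  have hdim : Module.finrank ℝ (Euc d) = d := finrank_euclideanSpace_fin
  refine ⟨(((min 1 (ctil / 2)) ^ (d + 1))⁻¹ + 2 ^ (d + 1) + 2 ^ (d + 1) * (ctil ^ d)⁻¹) *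
    ∫ w : Euc d, bProfile d ‖w‖,
    mul_pos (by positivity) (integral_bProfile_norm_pos volume hdim.le), ?_⟩
  intro T hT n ℓ hℓn x y
  obtain ⟨m, rfl⟩ := Nat.exists_eq_add_of_le hℓn
  have hscale : (2 : ℝ) ^ (ℓ + m) = 2 ^ m * 2 ^ ℓ := by rw [pow_add, mul_comm]
  have key := setIntegral_bProfile_mul_bProfile_comp_le volume hdim hctil
    (pow_pos two_pos ℓ) (one_le_pow₀ (n := m) one_le_two) hT K x y
  rw [mul_comm d, pow_mul, hscale]
  simpa only [bFun_eq_bProfile, norm_smul, Real.norm_eq_abs, abs_mul, abs_pow, abs_two] using key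

/-- for an expanding-at-rate-c̃ map T and a compact K, there is C > 0
depending only on d, c̃ and K with
2^{dn}·∫_K b(2^n(x−w))·b(2^ℓ(Tw−Ty)) dw ≤ C·b(2^ℓ(x−y)) for all n ≥ ℓ ≥ 0 and x, y. -/
theorem convolution_kernel_estimate
    (d : ℕ) (hd : 1 ≤ d) (ctil : ℝ) (hctil : 0 < ctil)
    (K : Set (Euc d)) (hK : IsCompact K) :
    ∃ C > (0:ℝ), ∀ T : Euc d → Euc d,
      (∀ x y : Euc d, ctil * ‖x - y‖ ≤ ‖T x - T y‖) →
      ∀ n ℓ : ℕ, ℓ ≤ n → ∀ x y : Euc d,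
        (2:ℝ) ^ (d * n) *
            ∫ w in K, bFun d ((2:ℝ) ^ n • (x - w)) * bFun d ((2:ℝ) ^ ℓ • (T w - T y))
          ≤ C * bFun d ((2:ℝ) ^ ℓ • (x - y)) :=
  convolution_kernel_estimate_general d ctil hctil K

end
end
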